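/- arXiv:1211.2943 — 3 statements merged into one kernel-verified Lean document; each statement's English description precedes it below -/
import Mathlib

section
/- Let G₀ = SL(2,ℝ), let A₀ be the subgroup of diagonal matrices with positive entries, M₀ = {±I}, K₀ = SO(2), and B₀ = SO_e(1,1) = {[[cosh s, sinh s],[sinh s, cosh s]] : s ∈ ℝ}. Then G₀ = A₀ M₀ B₀ K₀, i.e. every g ∈ SL(2,ℝ) can be written g = a m b k with a ∈ A₀, m ∈ M₀, b ∈ B₀, k ∈ K₀. -/
open Real Matrix


-- characterization lemma
lemma aux_fact (M : Matrix (Fin 2) (Fin 2) ℝ) (hdet : M.det = 1)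
    (hcond : M 0 1 * M 1 1 = M 0 0 * M 1 0) (hpos : 0 < M 0 0 * M 1 1) :
    ∃ (t s ε : ℝ), (ε = 1 ∨ ε = -1) ∧
      M = !![Real.exp t, 0; 0, Real.exp (-t)] * (ε • (1 : Matrix (Fin 2) (Fin 2) ℝ)) *
            !![Real.cosh s, Real.sinh s; Real.sinh s, Real.cosh s] := by
  have hdet2 : M 0 0 * M 1 1 - M 0 1 * M 1 0 = 1 := by
    rw [Matrix.det_fin_two] at hdet; linarith
  set ε : ℝ := if 0 < M 0 0 then 1 else -1 with hεdef
  have hε : ε = 1 ∨ ε = -1 := by unfold ε; split <;> simp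
  have hε2 : ε * ε = 1 := by rcases hε with h | h <;> rw [h] <;> norm_num
  set p := ε * M 0 0 with hpdef
  set q := ε * M 0 1 with hqdef
  set r := ε * M 1 0 with hrdef
  set w := ε * M 1 1 with hwdef
  have hp : 0 < p := by
    unfold p ε
    split
    · simpa using ‹0 < M 0 0›
    · rename_i h
      push_neg at h
      rcases lt_or_eq_of_le h with h' | h'
      · nlinarith
      · rw [h'] at hpos; simp at hpos
  have hw : 0 < w := by nlinarith [hε2]
  have hdet3 : p * w - q * r = 1 := by unfold p q r w; nlinarith [hε2]
  have hqw : q * w = p * r := by unfold p q r w; nlinarith [hε2]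
  clear_value ε p q r w
  have hqrkey : q * r * (p * w) = (q * w) ^ 2 := by linear_combination (-(q * w)) * hqw
  have hqr : 0 ≤ q * r := by nlinarith [sq_nonneg (q * w), mul_pos hp hw]
  set σ : ℝ := if 0 ≤ q then 1 else -1 with hσdef
  set s := Real.arsinh (σ * Real.sqrt (q * r)) with hsdef
  have hsinh : Real.sinh s = σ * Real.sqrt (q * r) := Real.sinh_arsinh _
  have hσ2 : σ * σ = 1 := by unfold σ; split <;> norm_num
  have hσq : σ * |q| = q := by
    unfold σ
    split
    · rename_i h; rw [abs_of_nonneg h]; ring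
    · rename_i h; push_neg at h; rw [abs_of_neg h]; ring
  clear_value σ s
  have hcosh : Real.cosh s = Real.sqrt (p * w) := by
    rw [hsdef, Real.cosh_arsinh]
    congr 1
    rw [mul_pow, sq_sqrt hqr]
    nlinarith [hσ2]
  set t := Real.log (Real.sqrt p / Real.sqrt w) with htdef
  have hsp : 0 < Real.sqrt p := Real.sqrt_pos.mpr hp
  have hsw : 0 < Real.sqrt w := Real.sqrt_pos.mpr hw
  have hexpt : Real.exp t = Real.sqrt p / Real.sqrt w := Real.exp_log (by positivity)
  have hexpnt : Real.exp (-t) = Real.sqrt w / Real.sqrt p := by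
    rw [Real.exp_neg, hexpt]; field_simp
  have hpp : Real.sqrt p * Real.sqrt p = p := Real.mul_self_sqrt hp.le
  have hww : Real.sqrt w * Real.sqrt w = w := Real.mul_self_sqrt hw.le
  -- r = q * w / p
  have hr2 : r * p = q * w := by linarith [hqw]
  -- sqrt(q*r)
  have hqr2 : q * r = q ^ 2 * (w / p) := by
    field_simp
    linear_combination (-q) * hqw
  have hsqrtqr : Real.sqrt (q * r) = |q| * (Real.sqrt w / Real.sqrt p) := by
    rw [hqr2, Real.sqrt_mul (sq_nonneg q), Real.sqrt_sq_eq_abs,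
      Real.sqrt_div hw.le]
  clear_value t
  -- entry identities
  have E1 : Real.exp t * Real.cosh s = p := by
    rw [hexpt, hcosh, Real.sqrt_mul hp.le]
    field_simp
    linear_combination hpp
  have E2 : Real.exp t * Real.sinh s = q := by
    rw [hexpt, hsinh, hsqrtqr]
    have : √p / √w * (σ * (|q| * (√w / √p))) = σ * |q| := by
      field_simp
    rw [this, hσq]
  have E3 : Real.exp (-t) * Real.sinh s = r := by
    rw [hexpnt, hsinh, hsqrtqr]
    have : Real.sqrt w / Real.sqrt p * (σ * (|q| * (Real.sqrt w / Real.sqrt p)))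
        = σ * |q| * (w / p) := by
      field_simp
      linear_combination σ * |q| * p * Real.sq_sqrt hw.le - σ * |q| * w * Real.sq_sqrt hp.le
    rw [this, hσq]
    field_simp
    linarith [hr2]
  have E4 : Real.exp (-t) * Real.cosh s = w := by
    rw [hexpnt, hcosh, Real.sqrt_mul hp.le]
    field_simp
    linear_combination hww
  refine ⟨t, s, ε, hε, ?_⟩
  have h1 : (ε • (1 : Matrix (Fin 2) (Fin 2) ℝ)) = !![ε, 0; 0, ε] := by
    ext i j
    fin_cases i <;> fin_cases j <;> simp [Matrix.one_apply]
  have key : !![Real.exp t, 0; 0, Real.exp (-t)] * (ε • (1 : Matrix (Fin 2) (Fin 2) ℝ)) *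
        !![Real.cosh s, Real.sinh s; Real.sinh s, Real.cosh s]
      = !![ε * (Real.exp t * Real.cosh s), ε * (Real.exp t * Real.sinh s);
           ε * (Real.exp (-t) * Real.sinh s), ε * (Real.exp (-t) * Real.cosh s)] := by
    rw [h1, Matrix.mul_fin_two, Matrix.mul_fin_two]
    congr 1 <;> ring
  rw [key, E1, E2, E3, E4, Matrix.eta_fin_two M]
  ext i j
  fin_cases i <;> fin_cases j <;> simp <;>
    [linear_combination (-ε) * hpdef - M 0 0 * hε2;
     linear_combination (-ε) * hqdef - M 0 1 * hε2;
     linear_combination (-ε) * hrdef - M 1 0 * hε2;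
     linear_combination (-ε) * hwdef - M 1 1 * hε2]

lemma exists_cs (P Q : ℝ) :
    ∃ c s : ℝ, c ^ 2 + s ^ 2 = 1 ∧ Q * (c ^ 2 - s ^ 2) = P * (2 * (c * s)) ∧
      0 < 1 + P * (c ^ 2 - s ^ 2) + Q * (2 * (c * s)) := by
  set z : ℂ := ⟨P, Q⟩ with hz
  by_cases h0 : z = 0
  · have hP : P = 0 := congrArg Complex.re h0
    have hQ : Q = 0 := congrArg Complex.im h0
    exact ⟨1, 0, by norm_num, by rw [hP, hQ]; ring, by rw [hP, hQ]; norm_num⟩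
  · set ψ := z.arg with hψ
    refine ⟨Real.cos (ψ / 2), Real.sin (ψ / 2), ?_, ?_, ?_⟩
    · linarith [Real.sin_sq_add_cos_sq (ψ / 2)]
    all_goals
      have hc2 : Real.cos (ψ / 2) ^ 2 - Real.sin (ψ / 2) ^ 2 = Real.cos ψ := by
        have h := Real.cos_two_mul (ψ / 2)
        have h2 : 2 * (ψ / 2) = ψ := by ring
        rw [h2] at h
        linarith [Real.sin_sq_add_cos_sq (ψ / 2)]
      have hs2 : 2 * (Real.cos (ψ / 2) * Real.sin (ψ / 2)) = Real.sin ψ := by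
        have := Real.sin_two_mul (ψ / 2)
        have h2 : 2 * (ψ / 2) = ψ := by ring
        rw [h2] at this
        rw [this]; ring
      have hre : z.re = P := rfl
      have him : z.im = Q := rfl
      have hcos : Real.cos ψ = P / ‖z‖ := by
        rw [hψ, Complex.cos_arg h0, hre]
      have hsin : Real.sin ψ = Q / ‖z‖ := by
        rw [hψ, Complex.sin_arg, him]
      have habs : 0 < ‖z‖ := by
        simpa using norm_pos_iff.mpr h0
      have hsq : ‖z‖ ^ 2 = P ^ 2 + Q ^ 2 := by
        rw [Complex.sq_norm, Complex.normSq_apply, hre, him]; ring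
    · rw [hc2, hs2, hcos, hsin]; ring
    · rw [hc2, hs2, hcos, hsin]
      have : P * (P / ‖z‖) + Q * (Q / ‖z‖) = ‖z‖ := by
        have e : P * (P / ‖z‖) + Q * (Q / ‖z‖)
            = (P ^ 2 + Q ^ 2) / ‖z‖ := by ring
        rw [e, ← hsq, sq, mul_div_assoc, div_self habs.ne', mul_one]
      linarith [habs]

/-- Decomposition `G₀ = A₀ M₀ B₀ K₀` for `G₀ = SL(2,ℝ)`: every real `2×2` matrix of
determinant one factors as (positive diagonal)·(±1)·(hyperbolic rotation)·(rotation). -/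
theorem stmt_3 (g : Matrix (Fin 2) (Fin 2) ℝ) (hg : g.det = 1) :
    ∃ (t s : ℝ) (ε : ℝ) (k : Matrix (Fin 2) (Fin 2) ℝ),
      (ε = 1 ∨ ε = -1) ∧
      kᵀ * k = 1 ∧ k.det = 1 ∧
      g = !![Real.exp t, 0; 0, Real.exp (-t)] * (ε • (1 : Matrix (Fin 2) (Fin 2) ℝ)) *
            !![Real.cosh s, Real.sinh s; Real.sinh s, Real.cosh s] * k := by
  have hdet2 : g 0 0 * g 1 1 - g 0 1 * g 1 0 = 1 := by
    rw [Matrix.det_fin_two] at hg; linarith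
  obtain ⟨c, u, h1, h2, h3⟩ := exists_cs (g 0 0 * g 1 1 + g 0 1 * g 1 0)
    (g 0 1 * g 1 1 - g 0 0 * g 1 0)
  set k : Matrix (Fin 2) (Fin 2) ℝ := !![c, u; -u, c] with hkdef
  set R : Matrix (Fin 2) (Fin 2) ℝ := !![c, -u; u, c] with hRdef
  set M : Matrix (Fin 2) (Fin 2) ℝ := g * R with hMdef
  have hRk : R * k = 1 := by
    ext i j
    fin_cases i <;> fin_cases j <;>
      simp [hkdef, hRdef, Matrix.mul_apply, Fin.sum_univ_two, Matrix.one_apply] <;>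
      nlinarith [h1]
  have hkTR : kᵀ = R := by
    rw [hkdef, hRdef]
    ext i j
    fin_cases i <;> fin_cases j <;> rfl
  have hkT : kᵀ * k = 1 := by rw [hkTR]; exact hRk
  have hkd : k.det = 1 := by
    rw [hkdef, Matrix.det_fin_two_of]; nlinarith [h1]
  have hgMk : g = M * k := by
    rw [hMdef, Matrix.mul_assoc, hRk, Matrix.mul_one]
  have e00 : M 0 0 = g 0 0 * c + g 0 1 * u := by
    simp [hMdef, hRdef, Matrix.mul_apply, Fin.sum_univ_two]
  have e01 : M 0 1 = -(g 0 0 * u) + g 0 1 * c := by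
    simp [hMdef, hRdef, Matrix.mul_apply, Fin.sum_univ_two]
  have e10 : M 1 0 = g 1 0 * c + g 1 1 * u := by
    simp [hMdef, hRdef, Matrix.mul_apply, Fin.sum_univ_two]
  have e11 : M 1 1 = -(g 1 0 * u) + g 1 1 * c := by
    simp [hMdef, hRdef, Matrix.mul_apply, Fin.sum_univ_two]
  have hMdet : M.det = 1 := by
    rw [hMdef, Matrix.det_mul, hg, one_mul, hRdef, Matrix.det_fin_two_of]
    nlinarith [h1]
  have hcond : M 0 1 * M 1 1 = M 0 0 * M 1 0 := by
    rw [e00, e01, e10, e11]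
    linear_combination h2
  have hpos : 0 < M 0 0 * M 1 1 := by
    have key : 2 * (M 0 0 * M 1 1) =
        1 + (g 0 0 * g 1 1 + g 0 1 * g 1 0) * (c ^ 2 - u ^ 2) +
          (g 0 1 * g 1 1 - g 0 0 * g 1 0) * (2 * (c * u)) := by
      rw [e00, e11]
      linear_combination (g 0 0 * g 1 1 - g 0 1 * g 1 0) * h1 + hdet2
    linarith [h3]
  obtain ⟨t, s, ε, hε, hMeq⟩ := aux_fact M hMdet hcond hpos
  exact ⟨t, s, ε, k, hε, hkT, hkd, by rw [hgMk, hMeq]⟩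
end

section
/- Let U be a finite dimensional vector space over ℝ with inner product, and let a diagonalizable commuting family (action of a real vector space 𝔞 via a representation) act on U with real weights. Let λ be a weight such that every weight μ of U satisfies: μ = λ - (nonnegative combination of elements of a fixed set Σ⁺ ⊆ 𝔞*). Let 𝔞⁺ = {X ∈ 𝔞 : α(X) ≥ 0 for all α ∈ Σ⁺}. Fix u ∈ U with nonzero component u_λ in the λ-weight space. Then there are constants C₁, C₂ > 0 with C₁ e^{λ(X)} ≤ ‖e^{π(X)} u‖ ≤ C₂ e^{λ(X)} for all X ∈ 𝔞⁺. -/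
open Real

/-- Sharp two-sided bound `C₁ e^{λ(X)} ≤ ‖e^{π(X)}u‖ ≤ C₂ e^{λ(X)}` on the positive
chamber, for a vector `u` with nonzero highest-weight component. -/
theorem stmt_7 {𝔞 U : Type*} [NormedAddCommGroup 𝔞] [NormedSpace ℝ 𝔞]
    [FiniteDimensional ℝ 𝔞]
    [NormedAddCommGroup U] [InnerProductSpace ℝ U] [FiniteDimensional ℝ U]
    {ι : Type*} [Fintype ι]
    -- weights and weight components of u
    (μ : ι → (𝔞 →ₗ[ℝ] ℝ)) (u : ι → U)
    (horth : ∀ i j, i ≠ j → inner ℝ (u i) (u j) = (0:ℝ))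
    -- the finite set Σ⁺ ⊂ 𝔞*
    {m : ℕ} (α : Fin m → (𝔞 →ₗ[ℝ] ℝ))
    -- the highest weight λ and the index of its component
    (lam : 𝔞 →ₗ[ℝ] ℝ) (i₀ : ι) (hi₀ : μ i₀ = lam) (hu₀ : u i₀ ≠ 0)
    -- every weight is λ minus a nonnegative combination of Σ⁺
    (hwt : ∀ i, ∃ c : Fin m → ℝ, (∀ j, 0 ≤ c j) ∧ μ i = lam - ∑ j, c j • α j) :
    ∃ C₁ > (0:ℝ), ∃ C₂ > (0:ℝ), ∀ X : 𝔞, (∀ j, 0 ≤ α j X) →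
      C₁ * Real.exp (lam X) ≤ ‖∑ i, Real.exp (μ i X) • u i‖ ∧
      ‖∑ i, Real.exp (μ i X) • u i‖ ≤ C₂ * Real.exp (lam X) := by
  have hpos : (0:ℝ) < ‖u i₀‖ := norm_pos_iff.2 hu₀
  refine ⟨‖u i₀‖, hpos, ∑ i, ‖u i‖,
    lt_of_lt_of_le hpos (Finset.single_le_sum (fun i _ => norm_nonneg _)
      (Finset.mem_univ i₀)), ?_⟩
  intro X hX
  have hle : ∀ i, μ i X ≤ lam X := by
    intro i
    obtain ⟨c, hc, hμ⟩ := hwt i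
    have : μ i X = lam X - ∑ j, c j * α j X := by
      rw [hμ]; simp
    rw [this]
    have : (0:ℝ) ≤ ∑ j, c j * α j X :=
      Finset.sum_nonneg fun j _ => mul_nonneg (hc j) (hX j)
    linarith
  constructor
  · have h1 : inner ℝ (∑ i, Real.exp (μ i X) • u i) (u i₀)
        = Real.exp (lam X) * (‖u i₀‖ * ‖u i₀‖) := by
      rw [sum_inner, Finset.sum_eq_single i₀]
      · rw [real_inner_smul_left, hi₀, real_inner_self_eq_norm_mul_norm]
      · intro b _ hb
        rw [real_inner_smul_left, horth b i₀ hb, mul_zero]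
      · simp
    have h2 := real_inner_le_norm (∑ i, Real.exp (μ i X) • u i) (u i₀)
    rw [h1] at h2
    have := Real.exp_pos (lam X)
    nlinarith
  · calc ‖∑ i, Real.exp (μ i X) • u i‖ ≤ ∑ i, ‖Real.exp (μ i X) • u i‖ :=
          norm_sum_le _ _
      _ = ∑ i, Real.exp (μ i X) * ‖u i‖ := by
          refine Finset.sum_congr rfl fun i _ => ?_
          rw [norm_smul, Real.norm_eq_abs, abs_of_pos (Real.exp_pos _)]
      _ ≤ ∑ i, Real.exp (lam X) * ‖u i‖ := by
          refine Finset.sum_le_sum fun i _ => ?_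
          exact mul_le_mul_of_nonneg_right (Real.exp_le_exp.2 (hle i)) (norm_nonneg _)
      _ = (∑ i, ‖u i‖) * Real.exp (lam X) := by
          rw [← Finset.mul_sum]; ring
end

section
/- Let V be a finite dimensional complex vector space and B ∈ End(V). Suppose F : [0,∞) → V satisfies F'(t) = -B F(t) - G(t), where ‖F(0)‖ ≤ M₀ and ‖G(t)‖ ≤ M₁ e^{(δ-1)t} for all t ≥ 0. Let Λ be an upper bound for the real parts of the eigenvalues of -B and d an upper bound for their algebraic multiplicities. Then there is a constant C depending only on B (not on F, G, M₀, M₁) such that ‖F(t)‖ ≤ C (M₀+M₁)(1+t)^{d} e^{t·max(Λ, δ-1)} for all t ≥ 0. -/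
set_option maxHeartbeats 2000000

open Real Module

section Aux

open NormedSpace

variable {V : Type*} [NormedAddCommGroup V] [NormedSpace ℂ V] [FiniteDimensional ℂ V]

lemma nilp_pow_d (A : Module.End ℂ V) (μ : ℂ) (d : ℕ)
    (hd : finrank ℂ (A.maxGenEigenspace μ) ≤ d)
    {v : V} (hv : v ∈ A.maxGenEigenspace μ) :
    ((A - μ • 1) ^ d) v = 0 := by
  set W := A.maxGenEigenspace μ with hWdef
  have hmt : Set.MapsTo (A - algebraMap ℂ (Module.End ℂ V) μ) W W :=
    Module.End.mapsTo_maxGenEigenspace_of_comm (Algebra.mul_sub_algebraMap_commutes A μ) μ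
  have hnil : IsNilpotent ((A - algebraMap ℂ (Module.End ℂ V) μ).restrict hmt) :=
    Module.End.isNilpotent_restrict_maxGenEigenspace_sub_algebraMap A μ
  set g := (A - algebraMap ℂ (Module.End ℂ V) μ).restrict hmt with hgdef
  have hg : g ^ d = 0 := by
    obtain ⟨n, hn⟩ := hnil
    have h1 : LinearMap.ker (g ^ n) = ⊤ := by rw [hn]; exact LinearMap.ker_zero
    have h2 : LinearMap.ker (g ^ finrank ℂ W) = ⊤ :=
      top_unique (h1 ▸ Module.End.ker_pow_le_ker_pow_finrank g n)
    have h3 : g ^ finrank ℂ W = 0 := by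
      rw [← LinearMap.ker_eq_top]; exact h2
    calc g ^ d = g ^ (d - finrank ℂ W) * g ^ finrank ℂ W := by
          rw [← pow_add, Nat.sub_add_cancel hd]
      _ = 0 := by rw [h3, mul_zero]
  have hpr := Module.End.pow_restrict (f' := A - algebraMap ℂ (Module.End ℂ V) μ) d hmt
  have happ := congrArg (fun f => (f ⟨v, hv⟩ : W)) (hpr.symm.trans hg)
  have hval := congrArg Subtype.val happ
  simp only [LinearMap.zero_apply, LinearMap.restrict_apply, ZeroMemClass.coe_zero] at hval
  simpa [Module.algebraMap_end_eq_smul_id, ← Module.End.one_eq_id] using hval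
variable {V : Type*} [NormedAddCommGroup V] [NormedSpace ℂ V] [FiniteDimensional ℂ V]

lemma exp_apply_eq (A' : V →L[ℂ] V) (μ : ℂ) (d : ℕ) {v : V}
    (hv : ((A' - μ • 1) ^ d) v = 0) (t : ℝ) :
    NormedSpace.exp (t • A') v = Complex.exp ((t:ℂ) * μ) •
      ∑ k ∈ Finset.range d, (((t:ℂ) ^ k * (k.factorial : ℂ)⁻¹) • (((A' - μ • 1) ^ k) v)) := by
  letI : NormedAlgebra ℚ (V →L[ℂ] V) := .restrictScalars ℚ ℂ _
  set N : V →L[ℂ] V := A' - μ • 1 with hN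
  have hsplit : t • A' = ((t:ℂ) * μ) • (1 : V →L[ℂ] V) + t • N := by
    rw [hN, smul_sub]
    have h1 : ((t:ℂ) * μ) • (1 : V →L[ℂ] V) = t • (μ • (1 : V →L[ℂ] V)) := by
      rw [← smul_assoc]; norm_num
    rw [h1]; abel
  have hcomm : Commute (((t:ℂ) * μ) • (1 : V →L[ℂ] V)) (t • N) :=
    ((Commute.one_left N).smul_left _).smul_right _
  rw [hsplit, exp_add_of_commute hcomm]
  have hexp1 : NormedSpace.exp (((t:ℂ) * μ) • (1 : V →L[ℂ] V))
      = Complex.exp ((t:ℂ) * μ) • (1 : V →L[ℂ] V) := by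
    rw [← Algebra.algebraMap_eq_smul_one, ← algebraMap_exp_comm,
      Algebra.algebraMap_eq_smul_one, Complex.exp_eq_exp_ℂ]
  have hzero : ∀ n, d ≤ n → (N ^ n) v = 0 := by
    intro n hn
    have h : N ^ n = N ^ (n - d) * N ^ d := by rw [← pow_add, Nat.sub_add_cancel hn]
    rw [h, ContinuousLinearMap.mul_apply, hv, map_zero]
  have hterm : ∀ n : ℕ, ((n.factorial : ℂ)⁻¹) • (((t • N) ^ n) v)
      = ((t:ℂ) ^ n * (n.factorial : ℂ)⁻¹) • ((N ^ n) v) := by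
    intro n
    rw [smul_pow, ContinuousLinearMap.smul_apply]
    rw [← algebraMap_smul ℂ (t ^ n) ((N ^ n) v)]
    push_cast
    rw [smul_smul, mul_comm]
    rfl
  have hsum : HasSum (fun n : ℕ => ((t:ℂ) ^ n * (n.factorial : ℂ)⁻¹) • ((N ^ n) v))
      (NormedSpace.exp (t • N) v) := by
    have h := (NormedSpace.exp_series_hasSum_exp' (𝕂 := ℂ) (t • N)).mapL
      (ContinuousLinearMap.apply ℂ V v)
    simp only [ContinuousLinearMap.apply_apply, ContinuousLinearMap.smul_apply] at h
    exact h.congr_fun fun n => by rw [← hterm n]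
  have hfin : HasSum (fun n : ℕ => ((t:ℂ) ^ n * (n.factorial : ℂ)⁻¹) • ((N ^ n) v))
      (∑ k ∈ Finset.range d, (((t:ℂ) ^ k * (k.factorial : ℂ)⁻¹) • ((N ^ k) v))) := by
    apply hasSum_sum_of_ne_finset_zero
    intro n hn
    rw [hzero n (by simpa using hn), smul_zero]
  have hexpN : NormedSpace.exp (t • N) v
      = ∑ k ∈ Finset.range d, (((t:ℂ) ^ k * (k.factorial : ℂ)⁻¹) • ((N ^ k) v)) :=
    hsum.unique hfin
  rw [ContinuousLinearMap.mul_apply, hexp1, ContinuousLinearMap.smul_apply,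
    ContinuousLinearMap.one_apply, hexpN]
variable {V : Type*} [NormedAddCommGroup V] [NormedSpace ℂ V] [FiniteDimensional ℂ V]

lemma clm_pow_apply (A : Module.End ℂ V) (μ : ℂ) (k : ℕ) (v : V) :
    ((LinearMap.toContinuousLinearMap A - μ • 1) ^ k) v = (((A - μ • 1) ^ k)) v := by
  induction k generalizing v with
  | zero => rfl
  | succ k ih =>
    rw [pow_succ, pow_succ, ContinuousLinearMap.mul_apply, Module.End.mul_apply]
    have h : (LinearMap.toContinuousLinearMap A - μ • 1) v = (A - μ • 1) v := by
      simp [ContinuousLinearMap.sub_apply, LinearMap.sub_apply,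
        LinearMap.coe_toContinuousLinearMap']
    rw [h, ih]

lemma hasEig_of_ne_bot (A : Module.End ℂ V) (μ : ℂ) (h : A.maxGenEigenspace μ ≠ ⊥) :
    A.HasEigenvalue μ := by
  rw [Module.End.maxGenEigenspace_eq_genEigenspace_finrank] at h
  exact Module.End.hasEigenvalue_of_hasGenEigenvalue (k := finrank ℂ V) h

lemma exp_op_bound (A : Module.End ℂ V) (Λ : ℝ) (d : ℕ)
    (hΛ : ∀ μ : ℂ, A.HasEigenvalue μ → μ.re ≤ Λ)
    (hd : ∀ μ : ℂ, finrank ℂ (A.maxGenEigenspace μ) ≤ d) :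
    ∃ C₀ > (0:ℝ), ∀ t : ℝ, 0 ≤ t → ∀ v : V,
      ‖NormedSpace.exp (t • LinearMap.toContinuousLinearMap A) v‖
        ≤ C₀ * (1 + t) ^ (d - 1) * Real.exp (Λ * t) * ‖v‖ := by
  set A' := LinearMap.toContinuousLinearMap A with hA'
  -- pointwise bound on generalized eigenvectors
  have key : ∀ (μ : ℂ), μ.re ≤ Λ → ∀ w ∈ A.maxGenEigenspace μ, ∀ t : ℝ, 0 ≤ t →
      ‖NormedSpace.exp (t • A') w‖ ≤ (∑ k ∈ Finset.range d, ‖((A' - μ • 1) ^ k) w‖)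
        * ((1 + t) ^ (d - 1) * Real.exp (Λ * t)) := by
    intro μ hμ w hw t ht
    have hnil : ((A' - μ • 1) ^ d) w = 0 := by
      rw [clm_pow_apply]; exact nilp_pow_d A μ d (hd μ) hw
    rw [exp_apply_eq A' μ d hnil t, norm_smul]
    have h1t : (1:ℝ) ≤ 1 + t := by linarith
    have hexpμ : ‖Complex.exp ((t:ℂ) * μ)‖ ≤ Real.exp (Λ * t) := by
      rw [Complex.norm_exp]
      apply Real.exp_le_exp.mpr
      simp only [Complex.mul_re, Complex.ofReal_re, Complex.ofReal_im, zero_mul, sub_zero]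
      calc t * μ.re ≤ t * Λ := by nlinarith
        _ = Λ * t := mul_comm _ _
    calc ‖Complex.exp ((t:ℂ) * μ)‖ * ‖∑ k ∈ Finset.range d,
            (((t:ℂ) ^ k * (k.factorial : ℂ)⁻¹) • (((A' - μ • 1) ^ k) w))‖
        ≤ Real.exp (Λ * t) * ((1 + t) ^ (d-1) * ∑ k ∈ Finset.range d, ‖((A' - μ • 1) ^ k) w‖) := by
          apply mul_le_mul hexpμ ?_ (norm_nonneg _) (Real.exp_nonneg _)
          calc ‖∑ k ∈ Finset.range d, (((t:ℂ) ^ k * (k.factorial : ℂ)⁻¹) • (((A' - μ • 1) ^ k) w))‖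
              ≤ ∑ k ∈ Finset.range d, ‖(((t:ℂ) ^ k * (k.factorial : ℂ)⁻¹) • (((A' - μ • 1) ^ k) w))‖ :=
                norm_sum_le _ _
            _ ≤ ∑ k ∈ Finset.range d, (1 + t) ^ (d-1) * ‖((A' - μ • 1) ^ k) w‖ := by
                apply Finset.sum_le_sum
                intro k hk
                rw [norm_smul]
                apply mul_le_mul_of_nonneg_right ?_ (norm_nonneg _)
                rw [norm_mul, norm_pow, Complex.norm_real]
                have hfac : ‖((k.factorial : ℂ))⁻¹‖ ≤ 1 := by
                  rw [norm_inv, Complex.norm_natCast]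
                  exact inv_le_one_of_one_le₀ (Nat.one_le_cast.mpr k.factorial_pos)
                have htk : |t| ^ k ≤ (1 + t) ^ (d - 1) := by
                  rw [abs_of_nonneg ht]
                  calc t ^ k ≤ (1 + t) ^ k := pow_le_pow_left₀ ht (by linarith) k
                    _ ≤ (1 + t) ^ (d - 1) :=
                      pow_le_pow_right₀ h1t (Nat.le_sub_one_of_lt (Finset.mem_range.mp hk))
                calc |t| ^ k * ‖((k.factorial : ℂ))⁻¹‖ ≤ |t| ^ k * 1 :=
                      mul_le_mul_of_nonneg_left hfac (by positivity)
                  _ = |t| ^ k := mul_one _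
                  _ ≤ (1 + t) ^ (d - 1) := htk
            _ = (1 + t) ^ (d-1) * ∑ k ∈ Finset.range d, ‖((A' - μ • 1) ^ k) w‖ := by
                rw [Finset.mul_sum]
      _ = _ := by ring
  -- pointwise boundedness of the rescaled family
  set c : ℝ → ℝ := fun t => (1 + t) ^ (d - 1) * Real.exp (Λ * t) with hc
  have hcpos : ∀ t : ℝ, 0 ≤ t → 0 < c t := by
    intro t ht
    have : (0:ℝ) < 1 + t := by linarith
    positivity
  set G : {t : ℝ // 0 ≤ t} → V →L[ℂ] V := fun i => ((c i.1)⁻¹ : ℝ) • NormedSpace.exp (i.1 • A') with hG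
  have hpt : ∀ v : V, ∃ C : ℝ, ∀ i, ‖G i v‖ ≤ C := by
    intro v
    have hv : v ∈ ⨆ μ : ℂ, A.maxGenEigenspace μ := by
      rw [Module.End.iSup_maxGenEigenspace_eq_top]; trivial
    obtain ⟨f, hf, hfv⟩ := (Submodule.mem_iSup_iff_exists_finsupp _ v).mp hv
    refine ⟨∑ μ ∈ f.support, ∑ k ∈ Finset.range d, ‖((A' - μ • 1) ^ k) (f μ)‖, ?_⟩
    rintro ⟨t, ht⟩
    have hexpand : NormedSpace.exp (t • A') v = ∑ μ ∈ f.support, NormedSpace.exp (t • A') (f μ) := by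
      rw [← hfv, Finsupp.sum, map_sum]
    have hbound : ‖NormedSpace.exp (t • A') v‖ ≤ (∑ μ ∈ f.support, ∑ k ∈ Finset.range d,
        ‖((A' - μ • 1) ^ k) (f μ)‖) * c t := by
      rw [hexpand, Finset.sum_mul]
      refine (norm_sum_le _ _).trans (Finset.sum_le_sum ?_)
      intro μ hμs
      have hμne : f μ ≠ 0 := Finsupp.mem_support_iff.mp hμs
      have hbot : A.maxGenEigenspace μ ≠ ⊥ := by
        intro hbot
        exact hμne (by simpa [hbot] using hf μ)
      have hre : μ.re ≤ Λ := hΛ μ (hasEig_of_ne_bot A μ hbot)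
      exact key μ hre (f μ) (hf μ) t ht
    have : ‖G ⟨t, ht⟩ v‖ = (c t)⁻¹ * ‖NormedSpace.exp (t • A') v‖ := by
      rw [hG]
      simp only [ContinuousLinearMap.smul_apply, norm_smul, Real.norm_eq_abs]
      rw [abs_of_nonneg (inv_nonneg.mpr (hcpos t ht).le)]
    rw [this]
    calc (c t)⁻¹ * ‖NormedSpace.exp (t • A') v‖
        ≤ (c t)⁻¹ * ((∑ μ ∈ f.support, ∑ k ∈ Finset.range d,
            ‖((A' - μ • 1) ^ k) (f μ)‖) * c t) :=
          mul_le_mul_of_nonneg_left hbound (inv_nonneg.mpr (hcpos t ht).le)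
      _ = _ := by
          field_simp
          exact mul_div_cancel_left₀ _ (hcpos t ht).ne'
  obtain ⟨C', hC'⟩ := banach_steinhaus hpt
  refine ⟨max C' 1, lt_of_lt_of_le one_pos (le_max_right _ _), ?_⟩
  intro t ht v
  have h1 : NormedSpace.exp (t • A') v = (c t) • (G ⟨t, ht⟩ v) := by
    rw [hG]
    simp only [ContinuousLinearMap.smul_apply, smul_smul]
    rw [mul_inv_cancel₀ (hcpos t ht).ne', one_smul]
  rw [h1, norm_smul, Real.norm_eq_abs, abs_of_nonneg (hcpos t ht).le]
  calc c t * ‖G ⟨t, ht⟩ v‖ ≤ c t * (C' * ‖v‖) :=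
        mul_le_mul_of_nonneg_left ((G ⟨t, ht⟩).le_of_opNorm_le (hC' _) v) (hcpos t ht).le
    _ ≤ c t * ((max C' 1) * ‖v‖) := by
        have h0 := (hcpos t ht).le
        gcongr
        exact le_max_left _ _
    _ = max C' 1 * (1 + t) ^ (d - 1) * Real.exp (Λ * t) * ‖v‖ := by rw [hc]; ring

end Aux

open NormedSpace in
/-- Quantitative inhomogeneous linear ODE estimate: if `F' = -B F - G`, `‖F(0)‖ ≤ M₀`,
`‖G(t)‖ ≤ M₁ e^{(δ-1)t}`, the eigenvalues of `-B` have real part `≤ Λ` and algebraic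
multiplicity `≤ d`, then `‖F(t)‖ ≤ C (M₀+M₁)(1+t)^d e^{t max(Λ,δ-1)}` with `C = C(B)`. -/
theorem stmt_13 {V : Type*} [NormedAddCommGroup V] [NormedSpace ℂ V]
    [FiniteDimensional ℂ V]
    (B : Module.End ℂ V) (Λ : ℝ) (d : ℕ)
    (hΛ : ∀ μ : ℂ, Module.End.HasEigenvalue (-B) μ → μ.re ≤ Λ)
    (hd : ∀ μ : ℂ, Module.finrank ℂ ((-B).maxGenEigenspace μ) ≤ d) :
    ∃ C > (0:ℝ), ∀ (δ : ℝ) (F G : ℝ → V) (M₀ M₁ : ℝ),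
      (∀ t : ℝ, HasDerivAt F (-(B (F t)) - G t) t) →
      ‖F 0‖ ≤ M₀ →
      (∀ t ≥ (0:ℝ), ‖G t‖ ≤ M₁ * Real.exp ((δ - 1) * t)) →
      ∀ t ≥ (0:ℝ), ‖F t‖ ≤ C * (M₀ + M₁) * (1 + t) ^ d * Real.exp (t * max Λ (δ - 1)) := by

  rcases subsingleton_or_nontrivial V with hV | hV
  · refine ⟨1, one_pos, ?_⟩
    intro δ F G M₀ M₁ hF hM₀ hG t ht
    have hFt : F t = 0 := Subsingleton.elim _ _
    have hM₀0 : 0 ≤ M₀ := le_trans (norm_nonneg _) hM₀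
    have hM₁0 : 0 ≤ M₁ := by
      have h := le_trans (norm_nonneg (G 0)) (hG 0 le_rfl)
      simpa using h
    rw [hFt, norm_zero]
    positivity
  · -- d ≥ 1
    have hd1 : 1 ≤ d := by
      obtain ⟨μ₀, hμ₀⟩ := Module.End.exists_eigenvalue (-B)
      have h1 := Module.End.pos_finrank_genEigenspace_of_hasEigenvalue hμ₀ one_pos
      have h2 : finrank ℂ (((-B).genEigenspace μ₀) 1) ≤ finrank ℂ ((-B).maxGenEigenspace μ₀) :=
        Submodule.finrank_mono (Module.End.genEigenspace_le_maximal (-B) μ₀ 1)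
      have h3 := hd μ₀
      exact lt_of_lt_of_le h1 (h2.trans h3)
    obtain ⟨C₀, hC₀pos, hC₀⟩ := exp_op_bound (-B) Λ d hΛ hd
    refine ⟨C₀, hC₀pos, ?_⟩
    intro δ F G M₀ M₁ hF hM₀ hG t ht
    borelize V
    letI : NormedAlgebra ℚ (V →L[ℂ] V) := .restrictScalars ℚ ℂ _
    set m := max Λ (δ - 1) with hm
    set A' : V →L[ℂ] V := LinearMap.toContinuousLinearMap (-B) with hA'
    have hC₀' : ∀ s : ℝ, 0 ≤ s → ∀ v : V,
        ‖NormedSpace.exp (s • A') v‖ ≤ C₀ * (1 + s) ^ (d - 1) * Real.exp (Λ * s) * ‖v‖ := by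
      intro s hs v
      exact hC₀ s hs v
    have hA'app : ∀ v : V, A' v = -(B v) := by
      intro v
      rw [hA']
      simp [LinearMap.coe_toContinuousLinearMap']
    have hM₀0 : 0 ≤ M₀ := le_trans (norm_nonneg _) hM₀
    have hM₁0 : 0 ≤ M₁ := by
      have h := le_trans (norm_nonneg (G 0)) (hG 0 le_rfl)
      simpa using h
    set H : ℝ → V := fun s => NormedSpace.exp (s • (-A')) (F s) with hHdef
    have hder : ∀ s : ℝ, HasDerivAt H (NormedSpace.exp (s • (-A')) (-(G s))) s := by
      intro s
      have h1 : HasDerivAt (fun u : ℝ => NormedSpace.exp (u • (-A'))) (NormedSpace.exp (s • (-A')) * (-A')) s :=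
        hasDerivAt_exp_smul_const (-A') s
      set L : (V →L[ℂ] V) →L[ℝ] (V →L[ℝ] V) :=
        ContinuousLinearMap.restrictScalarsL ℂ V V ℝ ℝ with hL
      have h1' : HasDerivAt (fun u : ℝ => L (NormedSpace.exp (u • (-A'))))
          (L (NormedSpace.exp (s • (-A')) * (-A'))) s :=
        L.hasFDerivAt.comp_hasDerivAt s h1
      have h2 := h1'.clm_apply (hF s)
      have hLapp : ∀ (x : V →L[ℂ] V) (w : V), (L x) w = x w := fun x w => rfl
      convert h2 using 1
      · rfl
      rw [hLapp, hLapp, ContinuousLinearMap.mul_apply, ← map_add]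
      congr 1
      have h3 : -(B (F s)) - G s = A' (F s) - G s := by rw [hA'app]
      rw [h3, ContinuousLinearMap.neg_apply]
      abel
    -- integrability of the derivative
    have hderiv_eq : (fun s => NormedSpace.exp (s • (-A')) (-(G s))) = deriv H := by
      funext s; exact ((hder s).deriv).symm
    have hint : IntervalIntegrable (fun s => NormedSpace.exp (s • (-A')) (-(G s)))
        MeasureTheory.volume 0 t := by
      obtain ⟨Kop, hKop⟩ := (isCompact_uIcc (a := (0:ℝ)) (b := t)).exists_bound_of_continuousOn
        (f := fun s : ℝ => NormedSpace.exp (s • (-A')))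
        ((exp_continuous.comp (continuous_id.smul continuous_const)).continuousOn)
      rw [intervalIntegrable_iff]
      refine MeasureTheory.Integrable.mono'
        (g := fun _ => Kop * (M₁ * Real.exp (|δ - 1| * t)))
        (MeasureTheory.integrableOn_const (ne_of_lt ?_)) ?_ ?_
      · rw [Set.uIoc_of_le ht]
        exact measure_Ioc_lt_top
      · exact ((hderiv_eq ▸ measurable_deriv H).aestronglyMeasurable).restrict
      · refine MeasureTheory.ae_restrict_of_forall_mem measurableSet_uIoc ?_
        intro s hs
        rw [Set.uIoc_of_le ht] at hs
        obtain ⟨hs0, hst⟩ := hs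
        have hGs : ‖G s‖ ≤ M₁ * Real.exp (|δ - 1| * t) := by
          refine (hG s hs0.le).trans ?_
          apply mul_le_mul_of_nonneg_left _ hM₁0
          apply Real.exp_le_exp.mpr
          have h1 : δ - 1 ≤ |δ - 1| := le_abs_self _
          nlinarith [abs_nonneg (δ - 1)]
        calc ‖NormedSpace.exp (s • (-A')) (-(G s))‖
            ≤ ‖NormedSpace.exp (s • (-A'))‖ * ‖-(G s)‖ := ContinuousLinearMap.le_opNorm _ _
          _ ≤ Kop * (M₁ * Real.exp (|δ - 1| * t)) := by
              rw [norm_neg]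
              apply mul_le_mul (hKop s ?_) hGs (norm_nonneg _)
                ((norm_nonneg _).trans (hKop s ?_))
              · exact Set.mem_uIcc_of_le hs0.le hst
              · exact Set.mem_uIcc_of_le hs0.le hst
    have hFTC : ∫ s in (0:ℝ)..t, NormedSpace.exp (s • (-A')) (-(G s)) = H t - H 0 :=
      intervalIntegral.integral_eq_sub_of_hasDerivAt (fun s _ => hder s) hint
    -- inversion
    have hinv : ∀ w : V, NormedSpace.exp (t • A') (NormedSpace.exp (t • (-A')) w) = w := by
      intro w
      have hco : Commute (t • A') (t • (-A')) :=
        (((Commute.refl A').neg_right).smul_left t).smul_right t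
      have h1 : NormedSpace.exp (t • A') * NormedSpace.exp (t • (-A')) = 1 := by
        rw [← exp_add_of_commute hco]
        have : t • A' + t • (-A') = 0 := by rw [smul_neg]; abel
        rw [this, _root_.NormedSpace.exp_zero]
      calc NormedSpace.exp (t • A') (NormedSpace.exp (t • (-A')) w)
          = (NormedSpace.exp (t • A') * NormedSpace.exp (t • (-A'))) w :=
            (ContinuousLinearMap.mul_apply _ _ _).symm
        _ = w := by rw [h1, ContinuousLinearMap.one_apply]
    have hH0 : H 0 = F 0 := by
      show (NormedSpace.exp ((0:ℝ) • (-A'))) (F 0) = F 0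
      rw [zero_smul, _root_.NormedSpace.exp_zero, ContinuousLinearMap.one_apply]
    have hFt : F t = NormedSpace.exp (t • A') (H 0)
        + ∫ s in (0:ℝ)..t, NormedSpace.exp (t • A') (NormedSpace.exp (s • (-A')) (-(G s))) := by
      rw [(NormedSpace.exp (t • A')).intervalIntegral_comp_comm hint, hFTC, ← map_add,
        add_sub_cancel]
      exact (hinv (F t)).symm
    -- semigroup composition
    have hsemi : ∀ s : ℝ, ∀ w : V,
        NormedSpace.exp (t • A') (NormedSpace.exp (s • (-A')) w) = NormedSpace.exp ((t - s) • A') w := by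
      intro s w
      have hco : Commute (t • A') (s • (-A')) :=
        (((Commute.refl A').neg_right).smul_left t).smul_right s
      have h1 : NormedSpace.exp (t • A') * NormedSpace.exp (s • (-A')) = NormedSpace.exp ((t - s) • A') := by
        rw [← exp_add_of_commute hco]
        congr 1
        rw [smul_neg, sub_smul]
        abel
      calc NormedSpace.exp (t • A') (NormedSpace.exp (s • (-A')) w)
          = (NormedSpace.exp (t • A') * NormedSpace.exp (s • (-A'))) w :=
            (ContinuousLinearMap.mul_apply _ _ _).symm
        _ = _ := by rw [h1]
    -- norm bounds
    have hterm1 : ‖NormedSpace.exp (t • A') (H 0)‖ ≤ C₀ * (1 + t) ^ (d - 1) * Real.exp (Λ * t) * M₀ := by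
      rw [hH0]
      calc ‖NormedSpace.exp (t • A') (F 0)‖ ≤ C₀ * (1 + t) ^ (d - 1) * Real.exp (Λ * t) * ‖F 0‖ :=
            hC₀' t ht (F 0)
        _ ≤ C₀ * (1 + t) ^ (d - 1) * Real.exp (Λ * t) * M₀ := by
            apply mul_le_mul_of_nonneg_left hM₀ (by positivity)
    have hintL : IntervalIntegrable (fun s => NormedSpace.exp (t • A') (NormedSpace.exp (s • (-A')) (-(G s))))
        MeasureTheory.volume 0 t := by
      rw [intervalIntegrable_iff] at hint ⊢
      exact (NormedSpace.exp (t • A')).integrable_comp hint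
    have hterm2 : ‖∫ s in (0:ℝ)..t, NormedSpace.exp (t • A') (NormedSpace.exp (s • (-A')) (-(G s)))‖
        ≤ C₀ * (1 + t) ^ (d - 1) * M₁ * Real.exp (m * t) * t := by
      calc ‖∫ s in (0:ℝ)..t, NormedSpace.exp (t • A') (NormedSpace.exp (s • (-A')) (-(G s)))‖
          ≤ ∫ s in (0:ℝ)..t, ‖NormedSpace.exp (t • A') (NormedSpace.exp (s • (-A')) (-(G s)))‖ :=
            intervalIntegral.norm_integral_le_integral_norm ht
        _ ≤ ∫ _s in (0:ℝ)..t, C₀ * (1 + t) ^ (d - 1) * M₁ * Real.exp (m * t) := by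
            apply intervalIntegral.integral_mono_on ht hintL.norm intervalIntegrable_const
            intro s hs
            obtain ⟨hs0, hst⟩ := hs
            rw [hsemi s (-(G s)), map_neg, norm_neg]
            have hts : (0:ℝ) ≤ t - s := by linarith
            calc ‖NormedSpace.exp ((t - s) • A') (G s)‖
                ≤ C₀ * (1 + (t - s)) ^ (d - 1) * Real.exp (Λ * (t - s)) * ‖G s‖ :=
                  hC₀' (t - s) hts (G s)
              _ ≤ C₀ * (1 + t) ^ (d - 1) * Real.exp (Λ * (t - s)) * (M₁ * Real.exp ((δ - 1) * s)) := by
                  apply mul_le_mul _ (hG s hs0) (norm_nonneg _) (by positivity)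
                  apply mul_le_mul_of_nonneg_right _ (Real.exp_nonneg _)
                  apply mul_le_mul_of_nonneg_left _ hC₀pos.le
                  exact pow_le_pow_left₀ (by linarith) (by linarith) _
              _ ≤ C₀ * (1 + t) ^ (d - 1) * M₁ * Real.exp (m * t) := by
                  have hexp : Real.exp (Λ * (t - s)) * Real.exp ((δ - 1) * s)
                      ≤ Real.exp (m * t) := by
                    rw [← Real.exp_add]
                    apply Real.exp_le_exp.mpr
                    have h1 : Λ ≤ m := le_max_left _ _
                    have h2 : δ - 1 ≤ m := le_max_right _ _
                    nlinarith
                  calc C₀ * (1 + t) ^ (d - 1) * Real.exp (Λ * (t - s)) * (M₁ * Real.exp ((δ - 1) * s))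
                      = (C₀ * (1 + t) ^ (d - 1) * M₁) * (Real.exp (Λ * (t - s)) * Real.exp ((δ - 1) * s)) := by
                        ring
                    _ ≤ (C₀ * (1 + t) ^ (d - 1) * M₁) * Real.exp (m * t) := by
                        apply mul_le_mul_of_nonneg_left hexp (by positivity)
        _ = C₀ * (1 + t) ^ (d - 1) * M₁ * Real.exp (m * t) * t := by
            rw [intervalIntegral.integral_const]
            simp
            ring
    -- combine
    have hΛm : Real.exp (Λ * t) ≤ Real.exp (m * t) := by
      apply Real.exp_le_exp.mpr
      have h1 : Λ ≤ m := le_max_left _ _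
      nlinarith
    have hpow : (1 + t) ^ d = (1 + t) ^ (d - 1) * (1 + t) := by
      rw [← pow_succ]
      congr 1
      omega
    have e1 : M₀ * Real.exp (Λ * t) + M₁ * Real.exp (m * t) * t
        ≤ (M₀ + M₁) * (1 + t) * Real.exp (m * t) := by
      nlinarith [Real.exp_pos (m * t), mul_le_mul_of_nonneg_left hΛm hM₀0,
        mul_nonneg (mul_nonneg hM₀0 ht) (Real.exp_pos (m * t)).le,
        mul_nonneg hM₁0 (Real.exp_pos (m * t)).le]
    calc ‖F t‖ ≤ ‖NormedSpace.exp (t • A') (H 0)‖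
          + ‖∫ s in (0:ℝ)..t, NormedSpace.exp (t • A') (NormedSpace.exp (s • (-A')) (-(G s)))‖ := by
          rw [hFt]; exact norm_add_le _ _
      _ ≤ C₀ * (1 + t) ^ (d - 1) * Real.exp (Λ * t) * M₀
          + C₀ * (1 + t) ^ (d - 1) * M₁ * Real.exp (m * t) * t := add_le_add hterm1 hterm2
      _ = C₀ * (1 + t) ^ (d - 1) * (M₀ * Real.exp (Λ * t) + M₁ * Real.exp (m * t) * t) := by
          ring
      _ ≤ C₀ * (1 + t) ^ (d - 1) * ((M₀ + M₁) * (1 + t) * Real.exp (m * t)) := by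
          apply mul_le_mul_of_nonneg_left e1 (by positivity)
      _ = C₀ * (M₀ + M₁) * ((1 + t) ^ (d - 1) * (1 + t)) * Real.exp (m * t) := by ring
      _ = C₀ * (M₀ + M₁) * (1 + t) ^ d * Real.exp (t * m) := by
          rw [← hpow, mul_comm m t]
end
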